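/- Fix θ_f ∈ [0, 2π) and n > 2 a natural number. For a 2nπ-arc LSL path (α, γ ∈ [0, 2nπ)) with k = 0 the feasible range of α is [0, θ_f], and with k = 1 it is [0, 2π + θ_f]; these coincide with the feasible ranges of the 4π-arc LSL path for k = 0 and k = 1 respectively. -/
import Mathlib

lemma aux_set (c L : ℝ) (hc : 0 ≤ c) (hcL : c < L) :
    {α : ℝ | ∃ γ : ℝ, 0 ≤ α ∧ α < L ∧ 0 ≤ γ ∧ γ < L ∧ α + γ = c} = Set.Icc 0 c := by
  ext α
  constructor
  · rintro ⟨γ, h1, h2, h3, h4, h5⟩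
    exact ⟨h1, by linarith⟩
  · rintro ⟨h1, h2⟩
    exact ⟨c - α, h1, by linarith, by linarith, by linarith, by ring⟩

/-- For `n > 2`, the feasible range of `α` for a 2nπ-arc LSL path
(`α, γ ∈ [0, 2nπ)`, `α + γ = 2kπ + θ_f`) is `[0, θ_f]` for `k = 0` and
`[0, 2π + θ_f]` for `k = 1`, coinciding with the feasible ranges of the 4π-arc
LSL path for `k = 0` and `k = 1` respectively. -/
theorem stmt_18 (θf : ℝ) (hθf : 0 ≤ θf ∧ θf < 2 * Real.pi) (n : ℕ) (hn : 2 < n) :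
    ({α : ℝ | ∃ γ : ℝ, 0 ≤ α ∧ α < 2 * (n : ℝ) * Real.pi ∧ 0 ≤ γ ∧
        γ < 2 * (n : ℝ) * Real.pi ∧ α + γ = θf} = Set.Icc 0 θf) ∧
    ({α : ℝ | ∃ γ : ℝ, 0 ≤ α ∧ α < 2 * (n : ℝ) * Real.pi ∧ 0 ≤ γ ∧
        γ < 2 * (n : ℝ) * Real.pi ∧ α + γ = 2 * Real.pi + θf}
      = Set.Icc 0 (2 * Real.pi + θf)) ∧
    ({α : ℝ | ∃ γ : ℝ, 0 ≤ α ∧ α < 2 * (n : ℝ) * Real.pi ∧ 0 ≤ γ ∧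
        γ < 2 * (n : ℝ) * Real.pi ∧ α + γ = θf}
      = {α : ℝ | ∃ γ : ℝ, 0 ≤ α ∧ α < 4 * Real.pi ∧ 0 ≤ γ ∧ γ < 4 * Real.pi ∧
        α + γ = θf}) ∧
    ({α : ℝ | ∃ γ : ℝ, 0 ≤ α ∧ α < 2 * (n : ℝ) * Real.pi ∧ 0 ≤ γ ∧
        γ < 2 * (n : ℝ) * Real.pi ∧ α + γ = 2 * Real.pi + θf}
      = {α : ℝ | ∃ γ : ℝ, 0 ≤ α ∧ α < 4 * Real.pi ∧ 0 ≤ γ ∧ γ < 4 * Real.pi ∧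
        α + γ = 2 * Real.pi + θf}) := by
  obtain ⟨h0, h2π⟩ := hθf
  have hπ := Real.pi_pos
  have hn3 : (3 : ℝ) ≤ (n : ℝ) := by exact_mod_cast hn
  have hL : 2 * Real.pi + θf < 2 * (n : ℝ) * Real.pi := by nlinarith
  have hθL : θf < 2 * (n : ℝ) * Real.pi := by linarith
  have h4 : θf < 4 * Real.pi := by linarith
  have h4' : 2 * Real.pi + θf < 4 * Real.pi := by linarith
  refine ⟨aux_set _ _ h0 hθL, aux_set _ _ (by linarith) hL, ?_, ?_⟩
  · rw [aux_set _ _ h0 hθL, aux_set _ _ h0 h4]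
  · rw [aux_set _ _ (by linarith) hL, aux_set _ _ (by linarith) h4']
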